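/- Any nonzero linear combination F(x) = Σ_{j=1}^k c_j · φ(x - μ_j) of probability density functions of k univariate Gaussians with unit variance and pairwise distinct means μ_1 < μ_2 < ... < μ_k has at most k-1 real zeros, provided k ≥ 2 and all coefficients c_j are nonzero. -/

import Mathlib

open Real

/-- Key lemma: an exponential polynomial `∑ a j * exp (μ j * x)` with `k ≥ 1` terms,
nonzero coefficients and strictly increasing exponents, vanishes on any finset of
cardinality at most `k - 1`. Proved by Rolle's theorem and induction. -/
lemma expPoly_card_le : ∀ (k : ℕ), 0 < k → ∀ (μ a : Fin k → ℝ), StrictMono μ →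
    (∀ j, a j ≠ 0) → ∀ s : Finset ℝ,
    (∀ x ∈ s, ∑ j, a j * Real.exp (μ j * x) = 0) → s.card ≤ k - 1 := by
  intro k
  induction k with
  | zero => intro h; omega
  | succ k IH =>
    intro _ μ a hμ ha s hs
    rcases Nat.eq_zero_or_pos k with hk0 | hk
    · subst hk0
      suffices hse : s = ∅ by simp [hse]
      apply Finset.eq_empty_of_forall_notMem
      intro x hx
      have h0 := hs x hx
      rw [Fin.sum_univ_one] at h0
      exact mul_ne_zero (ha 0) (Real.exp_ne_zero _) h0
    · by_contra hcard
      push_neg at hcard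
      obtain ⟨t, hts, htcard⟩ := Finset.exists_subset_card_eq (show k + 1 ≤ s.card by omega)
      set e : Fin (k + 1) → ℝ := fun i => ((t.orderIsoOfFin htcard i : ℝ)) with he_def
      have he : StrictMono e := fun i j hij => by
        exact_mod_cast (t.orderIsoOfFin htcard).strictMono hij
      have hmem : ∀ i, e i ∈ t := fun i => (t.orderIsoOfFin htcard i).2
      set f : ℝ → ℝ := fun x => ∑ j, a j * Real.exp ((μ j - μ 0) * x) with hf_def
      set f' : ℝ → ℝ := fun x => ∑ j, a j * (μ j - μ 0) * Real.exp ((μ j - μ 0) * x)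
        with hf'_def
      have hderiv : ∀ x : ℝ, HasDerivAt f (f' x) x := by
        intro x
        apply HasDerivAt.fun_sum
        intro j _
        have h1 : HasDerivAt (fun y : ℝ => (μ j - μ 0) * y) (μ j - μ 0) x := by
          simpa using (hasDerivAt_id x).const_mul (μ j - μ 0)
        have h2 := (h1.exp).const_mul (a j)
        exact h2.congr_deriv (by ring)
      have hfz : ∀ x ∈ t, f x = 0 := by
        intro x hx
        have h0 := hs x (hts hx)
        have : f x = (∑ j, a j * Real.exp (μ j * x)) * Real.exp (-(μ 0 * x)) := by
          rw [Finset.sum_mul]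
          apply Finset.sum_congr rfl
          intro j _
          rw [mul_assoc, ← Real.exp_add]
          congr 2
          ring
        rw [this, h0, zero_mul]
      have hcont : Continuous f := by
        apply continuous_finset_sum
        intro j _
        exact continuous_const.mul ((continuous_const.mul continuous_id).rexp)
      have hR : ∀ i : Fin k, ∃ y ∈ Set.Ioo (e i.castSucc) (e i.succ), f' y = 0 := by
        intro i
        have hlt : e i.castSucc < e i.succ := he (Fin.castSucc_lt_succ (i := i))
        exact exists_hasDerivAt_eq_zero hlt hcont.continuousOn
          (by rw [hfz _ (hmem _), hfz _ (hmem _)]) (fun x _ => hderiv x)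
      choose y hy1 hy2 using hR
      have hymono : StrictMono y := by
        intro i j hij
        have h1 : y i < e i.succ := (hy1 i).2
        have h2 : e i.succ ≤ e j.castSucc := by
          apply he.monotone
          rw [Fin.le_def]
          simp only [Fin.val_succ, Fin.coe_castSucc]
          exact hij
        have h3 : e j.castSucc < y j := (hy1 j).1
        linarith
      set t' : Finset ℝ := Finset.univ.image y with ht'_def
      have ht'card : t'.card = k := by
        rw [ht'_def, Finset.card_image_of_injective _ hymono.injective, Finset.card_univ,
          Fintype.card_fin]
      have hkey := IH hk (fun j => μ j.succ - μ 0) (fun j => a j.succ * (μ j.succ - μ 0))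
        (fun i j hij => by
          have := hμ (show (i.succ : Fin (k+1)) < j.succ by
            rw [Fin.lt_def]; simp only [Fin.val_succ]; omega)
          simpa using sub_lt_sub_right this (μ 0))
        (fun j => mul_ne_zero (ha _) (sub_ne_zero.mpr (ne_of_gt (hμ (Fin.succ_pos j)))))
        t'
        (by
          intro x hx
          rw [ht'_def] at hx
          obtain ⟨i, _, rfl⟩ := Finset.mem_image.mp hx
          have h0 := hy2 i
          simp only [hf'_def, Fin.sum_univ_succ, sub_self, mul_zero, zero_mul,
            zero_add] at h0
          simpa using h0)
      omega

/-- A nonzero linear combination of k unit-variance Gaussian densities with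
pairwise distinct means has at most k-1 real zeros. -/
theorem gaussian_combination_zeros {k : ℕ} (hk : 2 ≤ k)
    (μ : Fin k → ℝ) (hμ : StrictMono μ)
    (c : Fin k → ℝ) (hc : ∀ j, c j ≠ 0) :
    {x : ℝ | ∑ j, c j * ((Real.sqrt (2 * π))⁻¹ * Real.exp (-(x - μ j) ^ 2 / 2)) = 0}.Finite ∧
    {x : ℝ | ∑ j, c j * ((Real.sqrt (2 * π))⁻¹ * Real.exp (-(x - μ j) ^ 2 / 2)) = 0}.ncard
      ≤ k - 1 := by
  set a : Fin k → ℝ := fun j => c j * (Real.sqrt (2 * π))⁻¹ * Real.exp (-(μ j) ^ 2 / 2)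
    with ha_def
  have hsqrt : (Real.sqrt (2 * π))⁻¹ ≠ 0 := by
    apply inv_ne_zero
    positivity
  have ha : ∀ j, a j ≠ 0 := fun j =>
    mul_ne_zero (mul_ne_zero (hc j) hsqrt) (Real.exp_ne_zero _)
  set S := {x : ℝ | ∑ j, c j * ((Real.sqrt (2 * π))⁻¹ * Real.exp (-(x - μ j) ^ 2 / 2)) = 0}
    with hS_def
  have hSeq : S = {x : ℝ | ∑ j, a j * Real.exp (μ j * x) = 0} := by
    ext x
    simp only [hS_def, Set.mem_setOf_eq]
    have hterm : ∀ j, c j * ((Real.sqrt (2 * π))⁻¹ * Real.exp (-(x - μ j) ^ 2 / 2)) =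
        Real.exp (-x ^ 2 / 2) * (a j * Real.exp (μ j * x)) := by
      intro j
      rw [ha_def]
      simp only
      rw [show -(x - μ j) ^ 2 / 2 = -x ^ 2 / 2 + (-(μ j) ^ 2 / 2 + μ j * x) by ring,
        Real.exp_add, Real.exp_add]
      ring
    rw [Finset.sum_congr rfl (fun j _ => hterm j), ← Finset.mul_sum]
    constructor
    · intro h
      rcases mul_eq_zero.mp h with h | h
      · exact absurd h (Real.exp_ne_zero _)
      · exact h
    · intro h; rw [h, mul_zero]
  have hbound : ∀ s : Finset ℝ, ↑s ⊆ S → s.card ≤ k - 1 := by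
    intro s hsub
    apply expPoly_card_le k (by omega) μ a hμ ha
    intro x hx
    have := hsub hx
    rw [hSeq] at this
    exact this
  have hfin : S.Finite := by
    by_contra hinf
    have hinf' : S.Infinite := hinf
    obtain ⟨u, hu1, hu2⟩ := hinf'.exists_subset_card_eq k
    have := hbound u hu1
    omega
  refine ⟨hfin, ?_⟩
  haveI := hfin.fintype
  rw [Set.ncard_eq_toFinset_card']
  exact hbound S.toFinset (by simp)
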